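/- The circular symmetrization D* of an open set D ⊆ ℂ is open. -/

import Mathlib

open MeasureTheory

/-- The angular section of `D` at radius `t`: angles `θ ∈ [0, 2π)` with `t e^{iθ} ∈ D`. -/
def angSet (D : Set ℂ) (t : ℝ) : Set ℝ :=
  {θ : ℝ | θ ∈ Set.Ico (0 : ℝ) (2 * Real.pi) ∧ (t : ℂ) * Complex.exp (θ * Complex.I) ∈ D}

/-- The angular measure `|D(t)|` of the section of `D` at radius `t`. -/
noncomputable def angMeasure (D : Set ℂ) (t : ℝ) : ℝ :=
  (volume (angSet D t)).toReal

/-- The circular symmetrization `D*` of `D ⊆ ℂ`: its intersection with the circle `|z| = t`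
is the full circle if `D(t) = [0, 2π)`, empty if `D(t) = ∅`, and otherwise the centered arc
`{t e^{iθ} : |θ| < |D(t)|/2}`; moreover `0 ∈ D*` iff `0 ∈ D`. -/
noncomputable def circSym (D : Set ℂ) : Set ℂ :=
  {z : ℂ | (z = 0 ∧ (0 : ℂ) ∈ D) ∨
    (z ≠ 0 ∧
      (angSet D (‖z‖) = Set.Ico (0 : ℝ) (2 * Real.pi) ∨
        ((angSet D (‖z‖)).Nonempty ∧
          |Complex.arg z| < angMeasure D (‖z‖) / 2)))}

/-!
Since `D` is open and `(t, θ) ↦ t e^{iθ}` is continuous, a compact set of angles `θ` with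
`t e^{iθ} ∈ D` keeps this property at every nearby radius (tube lemma). Applied to `[0, 2π]`
this keeps full circles full; applied to compact subsets of the angular section exhausting its
measure (inner regularity) it makes `t ↦ |D(t)|` lower semicontinuous. On an arc
`|arg z| < |D(‖z‖)| / 2 ≤ π`, so `arg` is continuous at `z` and the strict inequality persists
near `z`.
-/

open Set Filter Topology Real Complex

lemma angSet_subset_Ico (D : Set ℂ) (t : ℝ) : angSet D t ⊆ Ico 0 (2 * π) :=
  fun _ hθ => hθ.1

lemma measurableSet_angSet {D : Set ℂ} (hD : IsOpen D) (t : ℝ) :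
    MeasurableSet (angSet D t) :=
  measurableSet_Ico.inter (hD.preimage (by fun_prop)).measurableSet

lemma volume_angSet_ne_top (D : Set ℂ) (t : ℝ) : volume (angSet D t) ≠ ⊤ :=
  ((measure_mono (angSet_subset_Ico D t)).trans_lt measure_Ico_lt_top).ne

lemma angMeasure_le_two_pi (D : Set ℂ) (t : ℝ) : angMeasure D t ≤ 2 * π := by
  have h := measure_mono (μ := volume) (angSet_subset_Ico D t)
  rw [Real.volume_Ico, sub_zero] at h
  exact ENNReal.toReal_le_of_le_ofReal (by positivity) h

lemma nonempty_angSet_of_pos {D : Set ℂ} {t : ℝ} (h : 0 < angMeasure D t) :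
    (angSet D t).Nonempty :=
  nonempty_of_measure_ne_zero (μ := volume) fun h0 => by simp [angMeasure, h0] at h

lemma eventually_forall_mul_exp_mem {D : Set ℂ} (hD : IsOpen D) {K : Set ℝ}
    (hK : IsCompact K) {t : ℝ} (hKD : ∀ θ ∈ K, (t : ℂ) * exp (θ * I) ∈ D) :
    ∀ᶠ s : ℝ in 𝓝 t, ∀ θ ∈ K, (s : ℂ) * exp (θ * I) ∈ D :=
  hK.eventually_forall_of_forall_eventually fun θ hθ =>
    (by fun_prop : Continuous fun p : ℝ × ℝ => (p.1 : ℂ) * exp (p.2 * I)).continuousAt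
      |>.preimage_mem_nhds (hD.mem_nhds (hKD θ hθ))

lemma eventually_angSet_eq_Ico {D : Set ℂ} (hD : IsOpen D) {t : ℝ}
    (h : angSet D t = Ico 0 (2 * π)) : ∀ᶠ s in 𝓝 t, angSet D s = Ico 0 (2 * π) := by
  have hIcc : ∀ θ ∈ Icc 0 (2 * π), (t : ℂ) * exp (θ * I) ∈ D := by
    rintro θ ⟨h0, h2π⟩
    rcases h2π.lt_or_eq with hlt | rfl
    · exact (h.superset ⟨h0, hlt⟩).2
    · have h0D := (h.superset ⟨le_rfl, two_pi_pos⟩).2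
      push_cast at h0D ⊢
      rwa [exp_two_pi_mul_I, ← Complex.exp_zero, ← zero_mul I]
  filter_upwards [eventually_forall_mul_exp_mem hD isCompact_Icc hIcc] with s hs
  exact (angSet_subset_Ico D s).antisymm fun θ hθ => ⟨hθ, hs θ (Ico_subset_Icc_self hθ)⟩

lemma lowerSemicontinuous_angMeasure {D : Set ℂ} (hD : IsOpen D) :
    LowerSemicontinuous (angMeasure D) := by
  intro t c hc
  rcases lt_or_ge c 0 with hc0 | hc0
  · exact Eventually.of_forall fun _ => hc0.trans_le ENNReal.toReal_nonneg
  have hlt : ENNReal.ofReal c < volume (angSet D t) :=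
    (ENNReal.ofReal_lt_iff_lt_toReal hc0 (volume_angSet_ne_top D t)).2 hc
  obtain ⟨K, hKsub, hK, hKc⟩ := (measurableSet_angSet hD t).exists_lt_isCompact hlt
  filter_upwards [eventually_forall_mul_exp_mem hD hK fun θ hθ => (hKsub hθ).2] with s hs
  have hKs : K ⊆ angSet D s := fun θ hθ => ⟨(hKsub hθ).1, hs θ hθ⟩
  exact (ENNReal.ofReal_lt_iff_lt_toReal hc0 (volume_angSet_ne_top D s)).1
    (hKc.trans_le (measure_mono hKs))

lemma mem_circSym_of_angSet_eq_Ico {D : Set ℂ} {z : ℂ}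
    (h : angSet D ‖z‖ = Ico 0 (2 * π)) : z ∈ circSym D := by
  rcases eq_or_ne z 0 with rfl | hz
  · exact Or.inl ⟨rfl, by simpa using (h.superset ⟨le_rfl, two_pi_pos⟩).2⟩
  · exact Or.inr ⟨hz, Or.inl h⟩

lemma eventually_mem_circSym_of_abs_arg_lt {D : Set ℂ} (hD : IsOpen D) {z : ℂ} (hz : z ≠ 0)
    (harg : |arg z| < angMeasure D ‖z‖ / 2) : ∀ᶠ w in 𝓝 z, w ∈ circSym D := by
  have hπ : arg z ≠ π := fun h => by
    rw [h, abs_of_pos pi_pos] at harg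
    linarith [angMeasure_le_two_pi D ‖z‖]
  obtain ⟨c, hc_arg, hc_meas⟩ := exists_between harg
  have harg_near : ∀ᶠ w in 𝓝 z, |arg w| < c :=
    (continuousAt_arg (mem_slitPlane_iff_arg.2 ⟨hπ, hz⟩)).abs.eventually_lt_const hc_arg
  have hmeas_near : ∀ᶠ w in 𝓝 z, 2 * c < angMeasure D ‖w‖ :=
    (lowerSemicontinuous_angMeasure hD).comp continuous_norm z (2 * c) (by
      simp only [Function.comp_apply]; linarith)
  filter_upwards [harg_near, hmeas_near, eventually_ne_nhds hz] with w hw_arg hw_meas hw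
  exact Or.inr ⟨hw, Or.inr ⟨nonempty_angSet_of_pos (by linarith [abs_nonneg (arg w)]),
    by linarith⟩⟩

theorem stmt_5 (D : Set ℂ) (hD : IsOpen D) : IsOpen (circSym D) := by
  have of_full : ∀ z : ℂ, angSet D ‖z‖ = Ico 0 (2 * π) → circSym D ∈ 𝓝 z := fun z h =>
    (continuous_norm.continuousAt.eventually (eventually_angSet_eq_Ico hD h)).mono
      fun _ => mem_circSym_of_angSet_eq_Ico
  refine isOpen_iff_mem_nhds.2 fun z hz => ?_
  rcases hz with ⟨rfl, h0D⟩ | ⟨hz, hfull | ⟨-, harg⟩⟩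
  · refine of_full 0 ((angSet_subset_Ico D _).antisymm fun θ hθ => ⟨hθ, ?_⟩)
    simpa using h0D
  · exact of_full z hfull
  · exact eventually_mem_circSym_of_abs_arg_lt hD hz harg
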